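/- arXiv:2106.13799 — 9 statements merged into one kernel-verified Lean document; each statement's English description precedes it below -/
import Mathlib

section
/- If the ensemble is class-wise calibrated, then for every confidence level q, the expected disagreement rate between two independently sampled hypotheses, conditioned on the ensemble confidence for class 0 being q, equals 2q(1-q) in the binary classification setting. -/
/-- In binary classification, if the ensemble is class-wise calibrated,
then for every confidence level `q` (with positive probability), the expected
disagreement rate between two i.i.d. hypotheses, conditioned on the ensemble
confidence for class 0 being `q`, equals `2q(1-q)`. -/
theorem classwise_calibration_conditional_disagreement
    {Ω H : Type} [Fintype Ω] [Fintype H]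
    (w : Ω → ℝ) (hw0 : ∀ ω, 0 ≤ w ω) (hw1 : ∑ ω, w ω = 1)
    (μ : H → ℝ) (hμ0 : ∀ h, 0 ≤ μ h) (hμ1 : ∑ h, μ h = 1)
    (Y : Ω → Fin 2) (hyp : H → Ω → Fin 2)
    (tilde0 : Ω → ℝ)
    (htilde : ∀ ω, tilde0 ω = ∑ h, μ h * (if hyp h ω = 0 then (1 : ℝ) else 0))
    (calib : ∀ q : ℝ, (0 < ∑ ω, w ω * (if tilde0 ω = q then (1 : ℝ) else 0)) →
      (∑ ω, w ω * (if tilde0 ω = q ∧ Y ω = 0 then (1 : ℝ) else 0)) =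
        q * ∑ ω, w ω * (if tilde0 ω = q then (1 : ℝ) else 0))
    (q : ℝ) (hq : 0 < ∑ ω, w ω * (if tilde0 ω = q then (1 : ℝ) else 0)) :
    (∑ h, ∑ h', μ h * μ h' *
        ∑ ω, w ω * (if tilde0 ω = q ∧ hyp h ω ≠ hyp h' ω then (1 : ℝ) else 0)) /
      (∑ ω, w ω * (if tilde0 ω = q then (1 : ℝ) else 0)) = 2 * q * (1 - q) := by
  have hp : ∀ ω, ∑ h, μ h * (if hyp h ω = 1 then (1 : ℝ) else 0) = 1 - tilde0 ω := by
    intro ω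
    have e : ∀ h, μ h * (if hyp h ω = 1 then (1:ℝ) else 0)
        = μ h - μ h * (if hyp h ω = 0 then (1:ℝ) else 0) := by
      intro h
      have : hyp h ω = 0 ∨ hyp h ω = 1 := by omega
      rcases this with h2 | h2 <;> simp [h2]
    rw [Finset.sum_congr rfl (fun h _ => e h), Finset.sum_sub_distrib, hμ1, htilde ω]
  -- per-ω disagreement probability
  have step : ∀ ω, (∑ h, ∑ h', μ h * μ h' *
      (if tilde0 ω = q ∧ hyp h ω ≠ hyp h' ω then (1 : ℝ) else 0)) =
      (if tilde0 ω = q then 2 * q * (1 - q) else 0) := by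
    intro ω
    by_cases hqω : tilde0 ω = q
    · simp only [hqω, if_true, true_and]
      have hind : ∀ h h', (if hyp h ω ≠ hyp h' ω then (1 : ℝ) else 0) =
          (if hyp h ω = 0 then (1:ℝ) else 0) * (if hyp h' ω = 1 then (1:ℝ) else 0) +
          (if hyp h ω = 1 then (1:ℝ) else 0) * (if hyp h' ω = 0 then (1:ℝ) else 0) := by
        intro h h'
        have h1 : hyp h ω = 0 ∨ hyp h ω = 1 := by omega
        have h2 : hyp h' ω = 0 ∨ hyp h' ω = 1 := by omega
        rcases h1 with e1 | e1 <;> rcases h2 with e2 | e2 <;> simp [e1, e2]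
      calc (∑ h, ∑ h', μ h * μ h' * (if hyp h ω ≠ hyp h' ω then (1 : ℝ) else 0))
          = ∑ h, ((μ h * (if hyp h ω = 0 then (1:ℝ) else 0)) *
              (∑ h', μ h' * (if hyp h' ω = 1 then (1:ℝ) else 0)) +
            (μ h * (if hyp h ω = 1 then (1:ℝ) else 0)) *
              (∑ h', μ h' * (if hyp h' ω = 0 then (1:ℝ) else 0))) := by
            apply Finset.sum_congr rfl; intro h _
            rw [Finset.mul_sum, Finset.mul_sum, ← Finset.sum_add_distrib]
            apply Finset.sum_congr rfl; intro h' _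
            rw [hind h h']; ring
        _ = (∑ h, μ h * (if hyp h ω = 0 then (1:ℝ) else 0)) *
              (∑ h', μ h' * (if hyp h' ω = 1 then (1:ℝ) else 0)) +
            (∑ h, μ h * (if hyp h ω = 1 then (1:ℝ) else 0)) *
              (∑ h', μ h' * (if hyp h' ω = 0 then (1:ℝ) else 0)) := by
            rw [Finset.sum_add_distrib, ← Finset.sum_mul, ← Finset.sum_mul]
        _ = 2 * q * (1 - q) := by
            rw [hp ω, ← htilde ω, hqω]; ring
    · simp [hqω]
  have key : (∑ h, ∑ h', μ h * μ h' *
        ∑ ω, w ω * (if tilde0 ω = q ∧ hyp h ω ≠ hyp h' ω then (1 : ℝ) else 0)) =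
      2 * q * (1 - q) * ∑ ω, w ω * (if tilde0 ω = q then (1 : ℝ) else 0) := by
    simp only [Finset.mul_sum]
    have e1 : ∀ h : H, (∑ h', ∑ ω, μ h * μ h' *
        (w ω * (if tilde0 ω = q ∧ hyp h ω ≠ hyp h' ω then (1 : ℝ) else 0))) =
        ∑ ω, ∑ h', μ h * μ h' *
        (w ω * (if tilde0 ω = q ∧ hyp h ω ≠ hyp h' ω then (1 : ℝ) else 0)) :=
      fun h => Finset.sum_comm
    rw [Finset.sum_congr rfl (fun h _ => e1 h), Finset.sum_comm]
    apply Finset.sum_congr rfl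
    intro ω _
    have := step ω
    calc (∑ h, ∑ h', μ h * μ h' *
          (w ω * (if tilde0 ω = q ∧ hyp h ω ≠ hyp h' ω then (1 : ℝ) else 0)))
        = w ω * ∑ h, ∑ h', μ h * μ h' *
          (if tilde0 ω = q ∧ hyp h ω ≠ hyp h' ω then (1 : ℝ) else 0) := by
          rw [Finset.mul_sum]
          apply Finset.sum_congr rfl; intro h _
          rw [Finset.mul_sum]
          apply Finset.sum_congr rfl; intro h' _
          ring
      _ = 2 * q * (1 - q) * (w ω * (if tilde0 ω = q then (1 : ℝ) else 0)) := by
          rw [this]; by_cases hqω : tilde0 ω = q <;> simp [hqω] <;> ring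
  rw [key, mul_div_assoc, div_self (ne_of_gt hq), mul_one]
end

section
/- In binary classification, if the ensemble satisfies class-wise calibration (for every q, P(Y = 0 | h̃_0(X) = q) = q), then the expected test error over hypotheses drawn from the ensemble distribution, restricted to the level set {x : h̃_0(x) = q}, equals 2q(1-q). -/
/-- In binary classification, if the ensemble satisfies class-wise
calibration, then the expected test error, restricted (conditioned) to the level set
`{x : h̃₀(x) = q}`, equals `2q(1-q)`. -/
theorem classwise_calibration_conditional_test_error
    {Ω H : Type} [Fintype Ω] [Fintype H]
    (w : Ω → ℝ) (hw0 : ∀ ω, 0 ≤ w ω) (hw1 : ∑ ω, w ω = 1)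
    (μ : H → ℝ) (hμ0 : ∀ h, 0 ≤ μ h) (hμ1 : ∑ h, μ h = 1)
    (Y : Ω → Fin 2) (hyp : H → Ω → Fin 2)
    (tilde0 : Ω → ℝ)
    (htilde : ∀ ω, tilde0 ω = ∑ h, μ h * (if hyp h ω = 0 then (1 : ℝ) else 0))
    (calib : ∀ q : ℝ, (0 < ∑ ω, w ω * (if tilde0 ω = q then (1 : ℝ) else 0)) →
      (∑ ω, w ω * (if tilde0 ω = q ∧ Y ω = 0 then (1 : ℝ) else 0)) =
        q * ∑ ω, w ω * (if tilde0 ω = q then (1 : ℝ) else 0))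
    (q : ℝ) (hq : 0 < ∑ ω, w ω * (if tilde0 ω = q then (1 : ℝ) else 0)) :
    (∑ h, μ h * ∑ ω, w ω * (if tilde0 ω = q ∧ hyp h ω ≠ Y ω then (1 : ℝ) else 0)) /
      (∑ ω, w ω * (if tilde0 ω = q then (1 : ℝ) else 0)) = 2 * q * (1 - q) := by
  have hcal := calib q hq
  have key : (∑ h, μ h * ∑ ω, w ω * (if tilde0 ω = q ∧ hyp h ω ≠ Y ω then (1 : ℝ) else 0))
      = 2 * q * (1 - q) * ∑ ω, w ω * (if tilde0 ω = q then (1 : ℝ) else 0) := by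
    have swap : (∑ h, μ h * ∑ ω, w ω * (if tilde0 ω = q ∧ hyp h ω ≠ Y ω then (1 : ℝ) else 0))
        = ∑ ω, w ω * ∑ h, μ h * (if tilde0 ω = q ∧ hyp h ω ≠ Y ω then (1 : ℝ) else 0) := by
      simp_rw [Finset.mul_sum]
      rw [Finset.sum_comm]
      exact Finset.sum_congr rfl fun ω _ => Finset.sum_congr rfl fun h _ => by ring
    have inner : ∀ ω, (∑ h, μ h * (if tilde0 ω = q ∧ hyp h ω ≠ Y ω then (1 : ℝ) else 0))
        = (if tilde0 ω = q then (if Y ω = 0 then 1 - q else q) else 0) := by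
      intro ω
      by_cases hωq : tilde0 ω = q
      · simp only [hωq, if_true, true_and]
        by_cases hY : Y ω = 0
        · simp only [hY, if_true]
          have : ∀ h : H, μ h * (if hyp h ω ≠ (0 : Fin 2) then (1 : ℝ) else 0)
              = μ h - μ h * (if hyp h ω = 0 then (1 : ℝ) else 0) := by
            intro h; by_cases hh : hyp h ω = 0 <;> simp [hh]
          rw [hY] at *
          simp_rw [this]
          rw [Finset.sum_sub_distrib, hμ1, ← htilde ω, hωq]
        · simp only [hY, if_false]
          have hY1 : Y ω = 1 := by omega
          have : ∀ h : H, (if hyp h ω ≠ Y ω then (1 : ℝ) else 0)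
              = (if hyp h ω = 0 then (1 : ℝ) else 0) := by
            intro h
            have : hyp h ω ≠ Y ω ↔ hyp h ω = 0 := by rw [hY1]; omega
            simp [this]
          simp_rw [this]
          rw [← htilde ω, hωq]
      · simp [hωq]
    rw [swap]
    have expand : ∀ ω, w ω * (if tilde0 ω = q then (if Y ω = 0 then 1 - q else q) else 0)
        = (1 - 2 * q) * (w ω * (if tilde0 ω = q ∧ Y ω = 0 then (1 : ℝ) else 0))
          + q * (w ω * (if tilde0 ω = q then (1 : ℝ) else 0)) := by
      intro ω
      by_cases hωq : tilde0 ω = q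
      · by_cases hY : Y ω = 0 <;> simp [hωq, hY] <;> ring
      · simp [hωq]
    simp_rw [inner, expand]
    rw [Finset.sum_add_distrib, ← Finset.mul_sum, ← Finset.mul_sum, hcal]
    ring
  rw [key, mul_div_assoc, div_self hq.ne', mul_one]
end

section
/- If the ensemble satisfies class-wise calibration on the data distribution, then the stochastic learning algorithm satisfies the Generalization Disagreement Equality: the expected disagreement rate between two i.i.d. hypotheses equals the expected test error of a single hypothesis. -/
open Finset

/-- If the ensemble satisfies class-wise calibration on the data
distribution, then the Generalization Disagreement Equality holds: the expected
disagreement rate between two i.i.d. hypotheses equals the expected test error. -/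
theorem classwise_calibration_implies_GDE
    {Ω H : Type} [Fintype Ω] [Fintype H] (K : ℕ)
    (w : Ω → ℝ) (hw0 : ∀ ω, 0 ≤ w ω) (hw1 : ∑ ω, w ω = 1)
    (μ : H → ℝ) (hμ0 : ∀ h, 0 ≤ μ h) (hμ1 : ∑ h, μ h = 1)
    (Y : Ω → Fin K) (hyp : H → Ω → Fin K)
    (tilde : Fin K → Ω → ℝ)
    (htilde : ∀ k ω, tilde k ω = ∑ h, μ h * (if hyp h ω = k then (1 : ℝ) else 0))
    (calib : ∀ (q : ℝ) (k : Fin K),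
      (0 < ∑ ω, w ω * (if tilde k ω = q then (1 : ℝ) else 0)) →
      (∑ ω, w ω * (if tilde k ω = q ∧ Y ω = k then (1 : ℝ) else 0)) =
        q * ∑ ω, w ω * (if tilde k ω = q then (1 : ℝ) else 0)) :
    (∑ h, ∑ h', μ h * μ h' * ∑ ω, w ω * (if hyp h ω ≠ hyp h' ω then (1 : ℝ) else 0)) =
      ∑ h, μ h * ∑ ω, w ω * (if hyp h ω ≠ Y ω then (1 : ℝ) else 0) := by
  classical
  -- indicator product identity
  have ind : ∀ a b : Fin K,
      (∑ k : Fin K, (if a = k then (1:ℝ) else 0) * (if b = k then (1:ℝ) else 0))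
        = if a = b then 1 else 0 := by
    intro a b
    rw [Finset.sum_eq_single a]
    · by_cases h : a = b
      · simp [h]
      · simp [h, (Ne.symm h : b ≠ a)]
    · intro c _ hc; simp [Ne.symm hc]
    · simp
  -- pointwise disagreement identity
  have fib1 : ∀ ω, (∑ h, ∑ h', μ h * μ h' * (if hyp h ω ≠ hyp h' ω then (1:ℝ) else 0))
      = 1 - ∑ k, tilde k ω * tilde k ω := by
    intro ω
    have eqsum : (∑ k, tilde k ω * tilde k ω)
        = ∑ h, ∑ h', μ h * μ h' * (if hyp h ω = hyp h' ω then (1:ℝ) else 0) := by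
      have expand : ∀ k : Fin K, tilde k ω * tilde k ω
          = ∑ h, ∑ h', (μ h * (if hyp h ω = k then (1:ℝ) else 0))
              * (μ h' * (if hyp h' ω = k then (1:ℝ) else 0)) := by
        intro k
        rw [htilde k ω, Finset.sum_mul_sum]
      calc (∑ k, tilde k ω * tilde k ω)
          = ∑ k, ∑ h, ∑ h', (μ h * (if hyp h ω = k then (1:ℝ) else 0))
              * (μ h' * (if hyp h' ω = k then (1:ℝ) else 0)) := by
            exact Finset.sum_congr rfl fun k _ => expand k
        _ = ∑ h, ∑ k : Fin K, ∑ h', (μ h * (if hyp h ω = k then (1:ℝ) else 0))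
              * (μ h' * (if hyp h' ω = k then (1:ℝ) else 0)) := Finset.sum_comm
        _ = ∑ h, ∑ h', ∑ k : Fin K, (μ h * (if hyp h ω = k then (1:ℝ) else 0))
              * (μ h' * (if hyp h' ω = k then (1:ℝ) else 0)) := by
            exact Finset.sum_congr rfl fun h _ => Finset.sum_comm
        _ = ∑ h, ∑ h', μ h * μ h' * (if hyp h ω = hyp h' ω then (1:ℝ) else 0) := by
            refine Finset.sum_congr rfl fun h _ => Finset.sum_congr rfl fun h' _ => ?_
            rw [← ind (hyp h ω) (hyp h' ω), Finset.mul_sum]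
            exact Finset.sum_congr rfl fun k _ => by ring
    have hsq : (∑ h, ∑ h', μ h * μ h') = 1 := by
      rw [← Finset.sum_mul_sum, hμ1, one_mul]
    calc (∑ h, ∑ h', μ h * μ h' * (if hyp h ω ≠ hyp h' ω then (1:ℝ) else 0))
        = ∑ h, ∑ h', (μ h * μ h' - μ h * μ h' * (if hyp h ω = hyp h' ω then (1:ℝ) else 0)) := by
          refine Finset.sum_congr rfl fun h _ => Finset.sum_congr rfl fun h' _ => ?_
          by_cases hh : hyp h ω = hyp h' ω <;> simp [hh]
      _ = (∑ h, ∑ h', μ h * μ h')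
          - ∑ h, ∑ h', μ h * μ h' * (if hyp h ω = hyp h' ω then (1:ℝ) else 0) := by
          rw [← Finset.sum_sub_distrib]
          exact Finset.sum_congr rfl fun h _ => by rw [Finset.sum_sub_distrib]
      _ = 1 - ∑ k, tilde k ω * tilde k ω := by rw [hsq, eqsum]
  -- pointwise error identity
  have fib2 : ∀ ω, (∑ h, μ h * (if hyp h ω ≠ Y ω then (1:ℝ) else 0))
      = 1 - tilde (Y ω) ω := by
    intro ω
    have hstep : (∑ h, μ h * (if hyp h ω ≠ Y ω then (1:ℝ) else 0))
        = ∑ h, (μ h - μ h * (if hyp h ω = Y ω then (1:ℝ) else 0)) := by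
      refine Finset.sum_congr rfl fun h _ => ?_
      by_cases hh : hyp h ω = Y ω <;> simp [hh]
    rw [hstep, Finset.sum_sub_distrib, hμ1, htilde (Y ω) ω]
  -- calibration key lemma
  have key : ∀ k : Fin K,
      (∑ ω, w ω * (tilde k ω * (if Y ω = k then (1:ℝ) else 0)))
        = ∑ ω, w ω * (tilde k ω * tilde k ω) := by
    intro k
    have hfib : ∀ f : Ω → ℝ,
        (∑ ω, f ω) = ∑ q ∈ (Finset.univ.image (tilde k)),
          ∑ ω ∈ Finset.univ.filter (fun ω => tilde k ω = q), f ω := by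
      intro f
      exact (Finset.sum_fiberwise_of_maps_to
        (fun ω _ => Finset.mem_image_of_mem _ (mem_univ ω)) f).symm
    rw [hfib, hfib]
    refine Finset.sum_congr rfl fun q _ => ?_
    by_cases hpos : 0 < ∑ ω, w ω * (if tilde k ω = q then (1:ℝ) else 0)
    · have hc := calib q k hpos
      have hmass : (∑ ω, w ω * (if tilde k ω = q then (1:ℝ) else 0))
          = ∑ ω ∈ Finset.univ.filter (fun ω => tilde k ω = q), w ω := by
        rw [Finset.sum_filter]
        refine Finset.sum_congr rfl fun ω _ => ?_
        by_cases h : tilde k ω = q <;> simp [h]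
      have hnum : (∑ ω, w ω * (if tilde k ω = q ∧ Y ω = k then (1:ℝ) else 0))
          = ∑ ω ∈ Finset.univ.filter (fun ω => tilde k ω = q),
              w ω * (if Y ω = k then (1:ℝ) else 0) := by
        rw [Finset.sum_filter]
        refine Finset.sum_congr rfl fun ω _ => ?_
        by_cases h : tilde k ω = q
        · by_cases h2 : Y ω = k <;> simp [h, h2]
        · simp [h]
      have hL : (∑ ω ∈ Finset.univ.filter (fun ω => tilde k ω = q),
          w ω * (tilde k ω * (if Y ω = k then (1:ℝ) else 0)))
          = q * ∑ ω ∈ Finset.univ.filter (fun ω => tilde k ω = q),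
              w ω * (if Y ω = k then (1:ℝ) else 0) := by
        rw [Finset.mul_sum]
        refine Finset.sum_congr rfl fun ω hω => ?_
        have ht : tilde k ω = q := (Finset.mem_filter.mp hω).2
        rw [ht]; ring
      have hR : (∑ ω ∈ Finset.univ.filter (fun ω => tilde k ω = q),
          w ω * (tilde k ω * tilde k ω))
          = q * (q * ∑ ω ∈ Finset.univ.filter (fun ω => tilde k ω = q), w ω) := by
        rw [Finset.mul_sum, Finset.mul_sum]
        refine Finset.sum_congr rfl fun ω hω => ?_
        have ht : tilde k ω = q := (Finset.mem_filter.mp hω).2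
        rw [ht]; ring
      rw [hL, hR, ← hnum, hc, hmass]
    · -- zero-mass fiber: every w ω on the fiber is 0
      have hle : (0:ℝ) ≤ ∑ ω, w ω * (if tilde k ω = q then (1:ℝ) else 0) := by
        refine Finset.sum_nonneg fun ω _ => ?_
        by_cases h : tilde k ω = q <;> simp [h, hw0 ω]
      have heq0 : (∑ ω, w ω * (if tilde k ω = q then (1:ℝ) else 0)) = 0 :=
        le_antisymm (not_lt.mp hpos) hle
      have hz : ∀ ω, tilde k ω = q → w ω = 0 := by
        intro ω hω
        have := (Finset.sum_eq_zero_iff_of_nonneg (fun ω _ => by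
          by_cases h : tilde k ω = q <;> simp [h, hw0 ω])).mp heq0 ω (mem_univ ω)
        simpa [hω] using this
      rw [Finset.sum_eq_zero, Finset.sum_eq_zero]
      · intro ω hω; rw [hz ω (Finset.mem_filter.mp hω).2]; ring
      · intro ω hω; rw [hz ω (Finset.mem_filter.mp hω).2]; ring
  -- assemble
  have lhs : (∑ h, ∑ h', μ h * μ h' * ∑ ω, w ω * (if hyp h ω ≠ hyp h' ω then (1:ℝ) else 0))
      = ∑ ω, w ω * (1 - ∑ k, tilde k ω * tilde k ω) := by
    calc (∑ h, ∑ h', μ h * μ h' * ∑ ω, w ω * (if hyp h ω ≠ hyp h' ω then (1:ℝ) else 0))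
        = ∑ h, ∑ h', ∑ ω, w ω * (μ h * μ h' * (if hyp h ω ≠ hyp h' ω then (1:ℝ) else 0)) := by
          refine Finset.sum_congr rfl fun h _ => Finset.sum_congr rfl fun h' _ => ?_
          rw [Finset.mul_sum]
          exact Finset.sum_congr rfl fun ω _ => by ring
      _ = ∑ h, ∑ ω, ∑ h', w ω * (μ h * μ h' * (if hyp h ω ≠ hyp h' ω then (1:ℝ) else 0)) :=
          Finset.sum_congr rfl fun h _ => Finset.sum_comm
      _ = ∑ ω, ∑ h, ∑ h', w ω * (μ h * μ h' * (if hyp h ω ≠ hyp h' ω then (1:ℝ) else 0)) :=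
          Finset.sum_comm
      _ = ∑ ω, w ω * (1 - ∑ k, tilde k ω * tilde k ω) := by
          refine Finset.sum_congr rfl fun ω _ => ?_
          rw [← fib1 ω, Finset.mul_sum]
          exact Finset.sum_congr rfl fun h _ => by rw [Finset.mul_sum]
  have rhs : (∑ h, μ h * ∑ ω, w ω * (if hyp h ω ≠ Y ω then (1:ℝ) else 0))
      = ∑ ω, w ω * (1 - tilde (Y ω) ω) := by
    calc (∑ h, μ h * ∑ ω, w ω * (if hyp h ω ≠ Y ω then (1:ℝ) else 0))
        = ∑ h, ∑ ω, w ω * (μ h * (if hyp h ω ≠ Y ω then (1:ℝ) else 0)) := by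
          refine Finset.sum_congr rfl fun h _ => ?_
          rw [Finset.mul_sum]
          exact Finset.sum_congr rfl fun ω _ => by ring
      _ = ∑ ω, ∑ h, w ω * (μ h * (if hyp h ω ≠ Y ω then (1:ℝ) else 0)) := Finset.sum_comm
      _ = ∑ ω, w ω * (1 - tilde (Y ω) ω) := by
          refine Finset.sum_congr rfl fun ω _ => ?_
          rw [← fib2 ω, Finset.mul_sum]
  rw [lhs, rhs]
  -- reduces to: ∑ ω, w ω * ∑ k tilde² = ∑ ω, w ω * tilde (Y ω) ω
  have main : (∑ ω, w ω * ∑ k, tilde k ω * tilde k ω)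
      = ∑ ω, w ω * tilde (Y ω) ω := by
    calc (∑ ω, w ω * ∑ k, tilde k ω * tilde k ω)
        = ∑ ω, ∑ k, w ω * (tilde k ω * tilde k ω) := by
          exact Finset.sum_congr rfl fun ω _ => by rw [Finset.mul_sum]
      _ = ∑ k, ∑ ω, w ω * (tilde k ω * tilde k ω) := Finset.sum_comm
      _ = ∑ k, ∑ ω, w ω * (tilde k ω * (if Y ω = k then (1:ℝ) else 0)) := by
          exact Finset.sum_congr rfl fun k _ => (key k).symm
      _ = ∑ ω, ∑ k, w ω * (tilde k ω * (if Y ω = k then (1:ℝ) else 0)) := Finset.sum_comm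
      _ = ∑ ω, w ω * tilde (Y ω) ω := by
          refine Finset.sum_congr rfl fun ω _ => ?_
          rw [Finset.sum_eq_single (Y ω)]
          · simp
          · intro k _ hk; simp [Ne.symm hk]
          · simp
  calc (∑ ω, w ω * (1 - ∑ k, tilde k ω * tilde k ω))
      = (∑ ω, w ω) - ∑ ω, w ω * ∑ k, tilde k ω * tilde k ω := by
        rw [← Finset.sum_sub_distrib]
        exact Finset.sum_congr rfl fun ω _ => by ring
    _ = (∑ ω, w ω) - ∑ ω, w ω * tilde (Y ω) ω := by rw [main]
    _ = ∑ ω, w ω * (1 - tilde (Y ω) ω) := by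
        rw [← Finset.sum_sub_distrib]
        exact Finset.sum_congr rfl fun ω _ => by ring
end

section
/- If the ensemble satisfies class-aggregated calibration, then the expected disagreement rate between two i.i.d. hypotheses equals the expected test error of a single hypothesis (the Generalization Disagreement Equality). -/
private lemma sum_swap3 {α β γ : Type*} (s : Finset α) (t : Finset β) (u : Finset γ)
    (f : α → β → γ → ℝ) :
    ∑ a ∈ s, ∑ b ∈ t, ∑ c ∈ u, f a b c = ∑ c ∈ u, ∑ a ∈ s, ∑ b ∈ t, f a b c := by
  calc ∑ a ∈ s, ∑ b ∈ t, ∑ c ∈ u, f a b c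
      = ∑ a ∈ s, ∑ c ∈ u, ∑ b ∈ t, f a b c :=
        Finset.sum_congr rfl fun a _ => Finset.sum_comm
    _ = ∑ c ∈ u, ∑ a ∈ s, ∑ b ∈ t, f a b c := Finset.sum_comm

private lemma sum_swap3' {α β γ : Type*} (s : Finset α) (t : Finset β) (u : Finset γ)
    (f : α → β → γ → ℝ) :
    ∑ a ∈ s, ∑ b ∈ t, ∑ c ∈ u, f a b c = ∑ b ∈ t, ∑ c ∈ u, ∑ a ∈ s, f a b c := by
  calc ∑ a ∈ s, ∑ b ∈ t, ∑ c ∈ u, f a b c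
      = ∑ b ∈ t, ∑ a ∈ s, ∑ c ∈ u, f a b c := Finset.sum_comm
    _ = ∑ b ∈ t, ∑ c ∈ u, ∑ a ∈ s, f a b c :=
        Finset.sum_congr rfl fun b _ => Finset.sum_comm

/-- If the ensemble satisfies class-aggregated calibration, then the
Generalization Disagreement Equality holds: the expected disagreement rate between
two i.i.d. hypotheses equals the expected test error of a single hypothesis. -/
theorem class_aggregated_calibration_implies_GDE
    {Ω H : Type} [Fintype Ω] [Fintype H] (K : ℕ)
    (w : Ω → ℝ) (hw0 : ∀ ω, 0 ≤ w ω) (hw1 : ∑ ω, w ω = 1)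
    (μ : H → ℝ) (hμ0 : ∀ h, 0 ≤ μ h) (hμ1 : ∑ h, μ h = 1)
    (Y : Ω → Fin K) (hyp : H → Ω → Fin K)
    (tilde : Fin K → Ω → ℝ)
    (htilde : ∀ k ω, tilde k ω = ∑ h, μ h * (if hyp h ω = k then (1 : ℝ) else 0))
    (calib : ∀ q : ℝ,
      (0 < ∑ k, ∑ ω, w ω * (if tilde k ω = q then (1 : ℝ) else 0)) →
      (∑ k, ∑ ω, w ω * (if tilde k ω = q ∧ Y ω = k then (1 : ℝ) else 0)) =
        q * ∑ k, ∑ ω, w ω * (if tilde k ω = q then (1 : ℝ) else 0)) :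
    (∑ h, ∑ h', μ h * μ h' * ∑ ω, w ω * (if hyp h ω ≠ hyp h' ω then (1 : ℝ) else 0)) =
      ∑ h, μ h * ∑ ω, w ω * (if hyp h ω ≠ Y ω then (1 : ℝ) else 0) := by
  classical
  have hCnn : ∀ q : ℝ, (0:ℝ) ≤ ∑ k, ∑ ω, w ω * (if tilde k ω = q then (1:ℝ) else 0) := by
    intro q
    refine Finset.sum_nonneg fun k _ => Finset.sum_nonneg fun ω _ => ?_
    exact mul_nonneg (hw0 ω) (by split <;> norm_num)
  have key : ∀ q : ℝ,
      (∑ k, ∑ ω, w ω * (if tilde k ω = q ∧ Y ω = k then (1 : ℝ) else 0)) =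
        q * ∑ k, ∑ ω, w ω * (if tilde k ω = q then (1 : ℝ) else 0) := by
    intro q
    rcases (hCnn q).lt_or_eq with h | h
    · exact calib q h
    · have hNle : (∑ k, ∑ ω, w ω * (if tilde k ω = q ∧ Y ω = k then (1:ℝ) else 0)) ≤
          ∑ k, ∑ ω, w ω * (if tilde k ω = q then (1:ℝ) else 0) := by
        refine Finset.sum_le_sum fun k _ => Finset.sum_le_sum fun ω _ => ?_
        refine mul_le_mul_of_nonneg_left ?_ (hw0 ω)
        by_cases h1 : tilde k ω = q <;> by_cases h2 : Y ω = k <;> simp [h1, h2]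
      have hNnn : (0:ℝ) ≤ ∑ k, ∑ ω, w ω * (if tilde k ω = q ∧ Y ω = k then (1:ℝ) else 0) := by
        refine Finset.sum_nonneg fun k _ => Finset.sum_nonneg fun ω _ => ?_
        exact mul_nonneg (hw0 ω) (by split <;> norm_num)
      rw [← h, mul_zero]
      linarith
  -- total ensemble mass squared
  have hμμ : (∑ h, ∑ h', μ h * μ h' : ℝ) = 1 := by
    rw [← Finset.sum_mul_sum, hμ1]; norm_num
  -- indicator product lemma
  have hsum_ind : ∀ a b : Fin K,
      (∑ k, (if a = k then (1:ℝ) else 0) * (if b = k then (1:ℝ) else 0)) =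
        if a = b then (1:ℝ) else 0 := by
    intro a b
    by_cases e : a = b
    · subst e
      have t : ∀ k : Fin K, ((if a = k then (1:ℝ) else 0) * (if a = k then (1:ℝ) else 0)) =
          if a = k then (1:ℝ) else 0 := fun k => by split <;> norm_num
      simp only [t]
      simp
    · rw [if_neg e]
      refine Finset.sum_eq_zero fun k _ => ?_
      by_cases h1 : a = k
      · by_cases h2 : b = k
        · exact absurd (h1.trans h2.symm) e
        · simp [h2]
      · simp [h1]
  -- per-ω disagreement identity
  have hdis : ∀ ω, (∑ h, ∑ h', μ h * μ h' * (if hyp h ω ≠ hyp h' ω then (1:ℝ) else 0)) =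
      1 - ∑ k, tilde k ω * tilde k ω := by
    intro ω
    have step1 : (∑ k, tilde k ω * tilde k ω) =
        ∑ h, ∑ h', μ h * μ h' * (if hyp h ω = hyp h' ω then (1:ℝ) else 0) := by
      calc ∑ k, tilde k ω * tilde k ω
          = ∑ k, ∑ h, ∑ h', (μ h * (if hyp h ω = k then (1:ℝ) else 0)) *
              (μ h' * (if hyp h' ω = k then (1:ℝ) else 0)) := by
            refine Finset.sum_congr rfl fun k _ => ?_
            rw [htilde k ω, Finset.sum_mul_sum]
        _ = ∑ h, ∑ h', ∑ k, (μ h * (if hyp h ω = k then (1:ℝ) else 0)) *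
              (μ h' * (if hyp h' ω = k then (1:ℝ) else 0)) := sum_swap3' _ _ _ _
        _ = ∑ h, ∑ h', μ h * μ h' * (if hyp h ω = hyp h' ω then (1:ℝ) else 0) := by
            refine Finset.sum_congr rfl fun h _ => Finset.sum_congr rfl fun h' _ => ?_
            rw [← hsum_ind (hyp h ω) (hyp h' ω), Finset.mul_sum]
            exact Finset.sum_congr rfl fun k _ => by ring
    have hsplit : (∑ h, ∑ h', (μ h * μ h' * (if hyp h ω ≠ hyp h' ω then (1:ℝ) else 0) +
        μ h * μ h' * (if hyp h ω = hyp h' ω then (1:ℝ) else 0))) = ∑ h, ∑ h', μ h * μ h' := by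
      refine Finset.sum_congr rfl fun h _ => Finset.sum_congr rfl fun h' _ => ?_
      by_cases e : hyp h ω = hyp h' ω <;> simp [e]
    simp only [Finset.sum_add_distrib] at hsplit
    rw [step1]
    linarith
  -- per-ω error identity
  have herr : ∀ ω, (∑ h, μ h * (if hyp h ω ≠ Y ω then (1:ℝ) else 0)) =
      1 - tilde (Y ω) ω := by
    intro ω
    have hsplit : (∑ h, (μ h * (if hyp h ω ≠ Y ω then (1:ℝ) else 0) +
        μ h * (if hyp h ω = Y ω then (1:ℝ) else 0))) = ∑ h, μ h := by
      refine Finset.sum_congr rfl fun h _ => ?_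
      by_cases e : hyp h ω = Y ω <;> simp [e]
    simp only [Finset.sum_add_distrib] at hsplit
    rw [htilde (Y ω) ω]
    linarith [hμ1]
  -- reshape LHS
  have L : (∑ h, ∑ h', μ h * μ h' * ∑ ω, w ω * (if hyp h ω ≠ hyp h' ω then (1 : ℝ) else 0)) =
      ∑ ω, w ω * (1 - ∑ k, tilde k ω * tilde k ω) := by
    calc (∑ h, ∑ h', μ h * μ h' * ∑ ω, w ω * (if hyp h ω ≠ hyp h' ω then (1 : ℝ) else 0))
        = ∑ h, ∑ h', ∑ ω, w ω * (μ h * μ h' * (if hyp h ω ≠ hyp h' ω then (1 : ℝ) else 0)) := by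
          refine Finset.sum_congr rfl fun h _ => Finset.sum_congr rfl fun h' _ => ?_
          rw [Finset.mul_sum]
          exact Finset.sum_congr rfl fun ω _ => by ring
      _ = ∑ ω, ∑ h, ∑ h', w ω * (μ h * μ h' * (if hyp h ω ≠ hyp h' ω then (1 : ℝ) else 0)) :=
          sum_swap3 _ _ _ _
      _ = ∑ ω, w ω * (1 - ∑ k, tilde k ω * tilde k ω) := by
          refine Finset.sum_congr rfl fun ω _ => ?_
          rw [← hdis ω, Finset.mul_sum]
          refine Finset.sum_congr rfl fun h _ => by rw [Finset.mul_sum]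
  -- reshape RHS
  have R : (∑ h, μ h * ∑ ω, w ω * (if hyp h ω ≠ Y ω then (1 : ℝ) else 0)) =
      ∑ ω, w ω * (1 - tilde (Y ω) ω) := by
    calc (∑ h, μ h * ∑ ω, w ω * (if hyp h ω ≠ Y ω then (1 : ℝ) else 0))
        = ∑ h, ∑ ω, w ω * (μ h * (if hyp h ω ≠ Y ω then (1 : ℝ) else 0)) := by
          refine Finset.sum_congr rfl fun h _ => ?_
          rw [Finset.mul_sum]
          exact Finset.sum_congr rfl fun ω _ => by ring
      _ = ∑ ω, ∑ h, w ω * (μ h * (if hyp h ω ≠ Y ω then (1 : ℝ) else 0)) := Finset.sum_comm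
      _ = ∑ ω, w ω * (1 - tilde (Y ω) ω) := by
          refine Finset.sum_congr rfl fun ω _ => ?_
          rw [← herr ω, Finset.mul_sum]
  rw [L, R]
  -- the second-moment identity via calibration
  have main : (∑ ω, w ω * ∑ k, tilde k ω * tilde k ω) = ∑ ω, w ω * tilde (Y ω) ω := by
    set Q : Finset ℝ := Finset.image (fun p : Fin K × Ω => tilde p.1 p.2) Finset.univ with hQ
    have memQ : ∀ k ω, tilde k ω ∈ Q := fun k ω =>
      Finset.mem_image.2 ⟨(k, ω), Finset.mem_univ _, rfl⟩
    have expand : ∀ (g : ℝ → ℝ) (k : Fin K) (ω : Ω),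
        g (tilde k ω) = ∑ q ∈ Q, if tilde k ω = q then g q else 0 := by
      intro g k ω
      rw [Finset.sum_ite_eq, if_pos (memQ k ω)]
    calc (∑ ω, w ω * ∑ k, tilde k ω * tilde k ω)
        = ∑ ω, ∑ k, ∑ q ∈ Q, w ω * (if tilde k ω = q then q * q else 0) := by
          refine Finset.sum_congr rfl fun ω _ => ?_
          rw [Finset.mul_sum]
          refine Finset.sum_congr rfl fun k _ => ?_
          rw [show tilde k ω * tilde k ω = ∑ q ∈ Q, if tilde k ω = q then q * q else 0 from
            expand (fun x => x * x) k ω, Finset.mul_sum]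
      _ = ∑ q ∈ Q, ∑ ω, ∑ k, w ω * (if tilde k ω = q then q * q else 0) := sum_swap3 _ _ _ _
      _ = ∑ q ∈ Q, q * (q * ∑ k, ∑ ω, w ω * (if tilde k ω = q then (1:ℝ) else 0)) := by
          refine Finset.sum_congr rfl fun q _ => ?_
          rw [Finset.sum_comm]
          have t : ∀ (k : Fin K) (ω : Ω), w ω * (if tilde k ω = q then q * q else 0) =
              q * (q * (w ω * (if tilde k ω = q then (1:ℝ) else 0))) := fun k ω => by
            split <;> ring
          simp only [t, ← Finset.mul_sum]
      _ = ∑ q ∈ Q, q * ∑ k, ∑ ω, w ω * (if tilde k ω = q ∧ Y ω = k then (1:ℝ) else 0) := by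
          refine Finset.sum_congr rfl fun q _ => ?_
          rw [key q]
      _ = ∑ q ∈ Q, ∑ k, ∑ ω, w ω * (if tilde k ω = q ∧ Y ω = k then q else 0) := by
          refine Finset.sum_congr rfl fun q _ => ?_
          rw [Finset.mul_sum]
          refine Finset.sum_congr rfl fun k _ => ?_
          rw [Finset.mul_sum]
          refine Finset.sum_congr rfl fun ω _ => by split <;> ring
      _ = ∑ k, ∑ ω, ∑ q ∈ Q, w ω * (if tilde k ω = q ∧ Y ω = k then q else 0) :=
          sum_swap3' _ _ _ _
      _ = ∑ ω, ∑ k, ∑ q ∈ Q, w ω * (if tilde k ω = q ∧ Y ω = k then q else 0) :=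
          Finset.sum_comm
      _ = ∑ ω, w ω * tilde (Y ω) ω := by
          refine Finset.sum_congr rfl fun ω _ => ?_
          have t : ∀ k : Fin K, (∑ q ∈ Q, w ω * (if tilde k ω = q ∧ Y ω = k then q else 0)) =
              w ω * (if Y ω = k then tilde k ω else 0) := by
            intro k
            by_cases hy : Y ω = k
            · simp only [hy, and_true, if_pos]
              rw [← Finset.mul_sum,
                show (∑ q ∈ Q, if tilde k ω = q then q else 0) = tilde k ω from
                  (expand (fun x => x) k ω).symm]
            · simp [hy]
          rw [Finset.sum_congr rfl fun k _ => t k, ← Finset.mul_sum]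
          congr 1
          simp
  simp only [mul_sub, mul_one]
  rw [Finset.sum_sub_distrib, Finset.sum_sub_distrib, main]
end

section
/- The absolute difference between the expected disagreement rate and the expected test error is bounded above by the Class Aggregated Calibration Error: |EDR − ETE| ≤ CACE(h̃), where CACE(h̃) = ∑_{q} |(∑_k P(Y=k, h̃_k(X)=q))/(∑_k P(h̃_k(X)=q)) − q| · ∑_k P(h̃_k(X)=q), summed over the finitely many values q taken by the confidences. -/
lemma perq_bound (q A B : ℝ) (h0A : 0 ≤ A) (hAB : A ≤ B) (h0q : 0 ≤ q) (hq1 : q ≤ 1) :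
    |q * A - q^2 * B| ≤ |A / B - q| * B := by
  rcases eq_or_lt_of_le (h0A.trans hAB) with hB | hB
  · have hA0 : A = 0 := le_antisymm (hAB.trans_eq hB.symm) h0A
    simp [← hB, hA0]
  · have hrhs : |A / B - q| * B = |A - q * B| := by
      have : A / B - q = (A - q * B) / B := by field_simp
      rw [this, abs_div, abs_of_pos hB, div_mul_cancel₀]
      exact ne_of_gt hB
    rw [hrhs]
    have : q * A - q^2 * B = q * (A - q * B) := by ring
    rw [this, abs_mul, abs_of_nonneg h0q]
    nlinarith [abs_nonneg (A - q * B)]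


/-- The absolute difference between the expected disagreement rate and
the expected test error is bounded above by the Class Aggregated Calibration Error,
where the integral over confidence values becomes a finite sum over the values taken
by the ensemble confidences. -/
theorem deviation_from_GDE_bounded_by_CACE
    {Ω H : Type} [Fintype Ω] [Fintype H] (K : ℕ)
    (w : Ω → ℝ) (hw0 : ∀ ω, 0 ≤ w ω) (hw1 : ∑ ω, w ω = 1)
    (μ : H → ℝ) (hμ0 : ∀ h, 0 ≤ μ h) (hμ1 : ∑ h, μ h = 1)
    (Y : Ω → Fin K) (hyp : H → Ω → Fin K)
    (tilde : Fin K → Ω → ℝ)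
    (htilde : ∀ k ω, tilde k ω = ∑ h, μ h * (if hyp h ω = k then (1 : ℝ) else 0)) :
    |(∑ h, ∑ h', μ h * μ h' * ∑ ω, w ω * (if hyp h ω ≠ hyp h' ω then (1 : ℝ) else 0)) -
        ∑ h, μ h * ∑ ω, w ω * (if hyp h ω ≠ Y ω then (1 : ℝ) else 0)| ≤
      ∑ q ∈ Finset.image (fun p : Fin K × Ω => tilde p.1 p.2) Finset.univ,
        |(∑ k, ∑ ω, w ω * (if Y ω = k ∧ tilde k ω = q then (1 : ℝ) else 0)) /
            (∑ k, ∑ ω, w ω * (if tilde k ω = q then (1 : ℝ) else 0)) - q| *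
          ∑ k, ∑ ω, w ω * (if tilde k ω = q then (1 : ℝ) else 0) := by
  classical
  set S := Finset.image (fun p : Fin K × Ω => tilde p.1 p.2) Finset.univ with hSdef
  have hmem : ∀ k ω, tilde k ω ∈ S := fun k ω =>
    Finset.mem_image.mpr ⟨(k, ω), Finset.mem_univ _, rfl⟩
  -- pointwise disagreement identity
  have hDis : ∀ ω, ∑ h, ∑ h', μ h * μ h' * (if hyp h ω ≠ hyp h' ω then (1:ℝ) else 0)
      = 1 - ∑ k, (tilde k ω)^2 := by
    intro ω
    have h1 : ∀ h h' : H, μ h * μ h' * (if hyp h ω ≠ hyp h' ω then (1:ℝ) else 0)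
        = μ h * μ h' - μ h * μ h' * (if hyp h ω = hyp h' ω then (1:ℝ) else 0) := by
      intro h h'; by_cases hh : hyp h ω = hyp h' ω <;> simp [hh]
    simp_rw [h1, Finset.sum_sub_distrib, ← Finset.mul_sum, hμ1,
      mul_one]
    congr 1
    have h2 : ∀ h h' : H, μ h * μ h' * (if hyp h ω = hyp h' ω then (1:ℝ) else 0)
        = ∑ k, (μ h * (if hyp h ω = k then (1:ℝ) else 0)) *
            (μ h' * (if hyp h' ω = k then (1:ℝ) else 0)) := by
      intro h h'
      have h3 : ∑ k, (if hyp h ω = k then (1:ℝ) else 0) * (if hyp h' ω = k then (1:ℝ) else 0)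
          = (if hyp h ω = hyp h' ω then (1:ℝ) else 0) := by
        rw [Finset.sum_eq_single (hyp h ω)]
        · simp [eq_comm]
        · intro k _ hk; simp [Ne.symm hk]
        · intro hk; exact absurd (Finset.mem_univ _) hk
      calc μ h * μ h' * (if hyp h ω = hyp h' ω then (1:ℝ) else 0)
          = μ h * μ h' * ∑ k, (if hyp h ω = k then (1:ℝ) else 0) *
              (if hyp h' ω = k then (1:ℝ) else 0) := by rw [h3]
        _ = ∑ k, (μ h * (if hyp h ω = k then (1:ℝ) else 0)) *
              (μ h' * (if hyp h' ω = k then (1:ℝ) else 0)) := by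
            rw [Finset.mul_sum]; exact Finset.sum_congr rfl fun k _ => by ring
    simp_rw [h2]
    calc ∑ h, ∑ h', ∑ k, (μ h * (if hyp h ω = k then (1:ℝ) else 0)) *
            (μ h' * (if hyp h' ω = k then (1:ℝ) else 0))
        = ∑ h, ∑ k, ∑ h', (μ h * (if hyp h ω = k then (1:ℝ) else 0)) *
            (μ h' * (if hyp h' ω = k then (1:ℝ) else 0)) :=
          Finset.sum_congr rfl fun h _ => Finset.sum_comm
      _ = ∑ k, ∑ h, ∑ h', (μ h * (if hyp h ω = k then (1:ℝ) else 0)) *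
            (μ h' * (if hyp h' ω = k then (1:ℝ) else 0)) := Finset.sum_comm
      _ = ∑ k, (∑ h, μ h * (if hyp h ω = k then (1:ℝ) else 0)) *
            (∑ h', μ h' * (if hyp h' ω = k then (1:ℝ) else 0)) := by
          simp_rw [← Finset.mul_sum, ← Finset.sum_mul]
      _ = ∑ k, (tilde k ω)^2 := by
          refine Finset.sum_congr rfl fun k _ => ?_
          rw [← htilde, sq]
  -- pointwise error identity
  have hErr : ∀ ω, ∑ h, μ h * (if hyp h ω ≠ Y ω then (1:ℝ) else 0)
      = 1 - tilde (Y ω) ω := by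
    intro ω
    have h1 : ∀ h : H, μ h * (if hyp h ω ≠ Y ω then (1:ℝ) else 0)
        = μ h - μ h * (if hyp h ω = Y ω then (1:ℝ) else 0) := by
      intro h; by_cases hh : hyp h ω = Y ω <;> simp [hh]
    simp_rw [h1, Finset.sum_sub_distrib, hμ1, htilde]
  -- rewrite LHS difference
  have hEDR : (∑ h, ∑ h', μ h * μ h' * ∑ ω, w ω * (if hyp h ω ≠ hyp h' ω then (1:ℝ) else 0))
      = ∑ ω, w ω * (1 - ∑ k, (tilde k ω)^2) := by
    calc ∑ h, ∑ h', μ h * μ h' * ∑ ω, w ω * (if hyp h ω ≠ hyp h' ω then (1:ℝ) else 0)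
        = ∑ h, ∑ h', ∑ ω, w ω * (μ h * μ h' * (if hyp h ω ≠ hyp h' ω then (1:ℝ) else 0)) := by
          refine Finset.sum_congr rfl fun h _ => Finset.sum_congr rfl fun h' _ => ?_
          rw [Finset.mul_sum]; exact Finset.sum_congr rfl fun ω _ => by ring
      _ = ∑ h, ∑ ω, ∑ h', w ω * (μ h * μ h' * (if hyp h ω ≠ hyp h' ω then (1:ℝ) else 0)) :=
          Finset.sum_congr rfl fun h _ => Finset.sum_comm
      _ = ∑ ω, ∑ h, ∑ h', w ω * (μ h * μ h' * (if hyp h ω ≠ hyp h' ω then (1:ℝ) else 0)) :=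
          Finset.sum_comm
      _ = ∑ ω, w ω * ∑ h, ∑ h', μ h * μ h' * (if hyp h ω ≠ hyp h' ω then (1:ℝ) else 0) := by
          simp_rw [← Finset.mul_sum]
      _ = ∑ ω, w ω * (1 - ∑ k, (tilde k ω)^2) := by
          exact Finset.sum_congr rfl fun ω _ => by rw [hDis ω]
  have hETE : (∑ h, μ h * ∑ ω, w ω * (if hyp h ω ≠ Y ω then (1:ℝ) else 0))
      = ∑ ω, w ω * (1 - tilde (Y ω) ω) := by
    calc ∑ h, μ h * ∑ ω, w ω * (if hyp h ω ≠ Y ω then (1:ℝ) else 0)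
        = ∑ h, ∑ ω, w ω * (μ h * (if hyp h ω ≠ Y ω then (1:ℝ) else 0)) := by
          refine Finset.sum_congr rfl fun h _ => ?_
          rw [Finset.mul_sum]; exact Finset.sum_congr rfl fun ω _ => by ring
      _ = ∑ ω, ∑ h, w ω * (μ h * (if hyp h ω ≠ Y ω then (1:ℝ) else 0)) :=
          Finset.sum_comm
      _ = ∑ ω, w ω * (1 - tilde (Y ω) ω) := by
          refine Finset.sum_congr rfl fun ω _ => ?_
          rw [← Finset.mul_sum, hErr ω]
  -- middle form indexed by (k, ω)
  have hmid : (∑ h, ∑ h', μ h * μ h' * ∑ ω, w ω * (if hyp h ω ≠ hyp h' ω then (1:ℝ) else 0)) -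
      (∑ h, μ h * ∑ ω, w ω * (if hyp h ω ≠ Y ω then (1:ℝ) else 0))
      = ∑ k, ∑ ω, (w ω * (if Y ω = k then tilde k ω else 0) - w ω * (tilde k ω)^2) := by
    rw [hEDR, hETE, ← Finset.sum_sub_distrib, Finset.sum_comm]
    refine Finset.sum_congr rfl fun ω _ => ?_
    rw [Finset.sum_sub_distrib, ← Finset.mul_sum, ← Finset.mul_sum, Finset.sum_ite_eq]
    simp only [Finset.mem_univ, if_pos]
    ring
  -- q-indexed form
  have hqform : ∑ q ∈ S,
      (q * (∑ k, ∑ ω, w ω * (if Y ω = k ∧ tilde k ω = q then (1:ℝ) else 0)) -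
       q^2 * (∑ k, ∑ ω, w ω * (if tilde k ω = q then (1:ℝ) else 0)))
      = ∑ k, ∑ ω, (w ω * (if Y ω = k then tilde k ω else 0) - w ω * (tilde k ω)^2) := by
    have expand : ∀ q ∈ S,
        (q * (∑ k, ∑ ω, w ω * (if Y ω = k ∧ tilde k ω = q then (1:ℝ) else 0)) -
         q^2 * (∑ k, ∑ ω, w ω * (if tilde k ω = q then (1:ℝ) else 0)))
        = ∑ k, ∑ ω, (q * (w ω * (if Y ω = k ∧ tilde k ω = q then (1:ℝ) else 0)) -
            q^2 * (w ω * (if tilde k ω = q then (1:ℝ) else 0))) := by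
      intro q _
      simp_rw [Finset.mul_sum, ← Finset.sum_sub_distrib]
    rw [Finset.sum_congr rfl expand]
    calc ∑ q ∈ S, ∑ k, ∑ ω, (q * (w ω * (if Y ω = k ∧ tilde k ω = q then (1:ℝ) else 0)) -
            q^2 * (w ω * (if tilde k ω = q then (1:ℝ) else 0)))
        = ∑ k, ∑ q ∈ S, ∑ ω, (q * (w ω * (if Y ω = k ∧ tilde k ω = q then (1:ℝ) else 0)) -
            q^2 * (w ω * (if tilde k ω = q then (1:ℝ) else 0))) := Finset.sum_comm
      _ = ∑ k, ∑ ω, ∑ q ∈ S, (q * (w ω * (if Y ω = k ∧ tilde k ω = q then (1:ℝ) else 0)) -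
            q^2 * (w ω * (if tilde k ω = q then (1:ℝ) else 0))) :=
          Finset.sum_congr rfl fun k _ => Finset.sum_comm
      _ = ∑ k, ∑ ω, (w ω * (if Y ω = k then tilde k ω else 0) - w ω * (tilde k ω)^2) := by
          refine Finset.sum_congr rfl fun k _ => Finset.sum_congr rfl fun ω _ => ?_
          rw [Finset.sum_eq_single_of_mem (tilde k ω) (hmem k ω)]
          · by_cases hY : Y ω = k <;> simp [hY] <;> ring
          · intro q _ hne
            have h1 : ¬ (tilde k ω = q) := fun h => hne h.symm
            simp [h1]
  -- final bound
  calc |(∑ h, ∑ h', μ h * μ h' * ∑ ω, w ω * (if hyp h ω ≠ hyp h' ω then (1:ℝ) else 0)) -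
        ∑ h, μ h * ∑ ω, w ω * (if hyp h ω ≠ Y ω then (1:ℝ) else 0)|
      = |∑ q ∈ S,
          (q * (∑ k, ∑ ω, w ω * (if Y ω = k ∧ tilde k ω = q then (1:ℝ) else 0)) -
           q^2 * (∑ k, ∑ ω, w ω * (if tilde k ω = q then (1:ℝ) else 0)))| := by
        rw [hmid, ← hqform]
    _ ≤ ∑ q ∈ S, |q * (∑ k, ∑ ω, w ω * (if Y ω = k ∧ tilde k ω = q then (1:ℝ) else 0)) -
           q^2 * (∑ k, ∑ ω, w ω * (if tilde k ω = q then (1:ℝ) else 0))| :=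
        Finset.abs_sum_le_sum_abs _ _
    _ ≤ ∑ q ∈ S,
        |(∑ k, ∑ ω, w ω * (if Y ω = k ∧ tilde k ω = q then (1:ℝ) else 0)) /
            (∑ k, ∑ ω, w ω * (if tilde k ω = q then (1:ℝ) else 0)) - q| *
          ∑ k, ∑ ω, w ω * (if tilde k ω = q then (1:ℝ) else 0) := by
      refine Finset.sum_le_sum fun q hq => ?_
      have h0A : 0 ≤ ∑ k, ∑ ω, w ω * (if Y ω = k ∧ tilde k ω = q then (1:ℝ) else 0) := by
        refine Finset.sum_nonneg fun k _ => Finset.sum_nonneg fun ω _ => ?_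
        exact mul_nonneg (hw0 ω) (by positivity)
      have hAB : (∑ k, ∑ ω, w ω * (if Y ω = k ∧ tilde k ω = q then (1:ℝ) else 0))
          ≤ ∑ k, ∑ ω, w ω * (if tilde k ω = q then (1:ℝ) else 0) := by
        refine Finset.sum_le_sum fun k _ => Finset.sum_le_sum fun ω _ => ?_
        refine mul_le_mul_of_nonneg_left ?_ (hw0 ω)
        by_cases h1 : tilde k ω = q <;> by_cases h2 : Y ω = k <;> simp [h1, h2]
      obtain ⟨⟨k, ω⟩, -, rfl⟩ := Finset.mem_image.mp hq
      have h0q : 0 ≤ tilde k ω := by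
        rw [htilde]
        exact Finset.sum_nonneg fun h _ => mul_nonneg (hμ0 h) (by positivity)
      have hq1 : tilde k ω ≤ 1 := by
        have hle : (∑ h, μ h * (if hyp h ω = k then (1:ℝ) else 0)) ≤ ∑ h, μ h :=
          Finset.sum_le_sum fun h _ => by
            by_cases hh : hyp h ω = k <;> simp [hh, hμ0 h]
        rw [htilde]; exact hle.trans_eq hμ1
      exact perq_bound _ _ _ h0A hAB h0q hq1
end

section
/- Suppose the Generalization Disagreement Equality holds (EDR = ETE) and there exists κ ∈ [1/2, 1] such that for all h, h' in the support of μ, Dis(h,h') ≤ κ(TestErr(h) + TestErr(h')). Then Var_{h,h'∼μ}(Dis(h,h')) ≤ 2κ² Var_{h∼μ}(TestErr(h)) + (4κ² − 1)·ETE². -/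
/-- If GDE holds and `Dis(h,h') ≤ κ(TestErr(h)+TestErr(h'))` on the
support of `μ` for some `κ ∈ [1/2,1]`, then
`Var(Dis) ≤ 2κ² Var(TestErr) + (4κ² − 1) ETE²`. -/
theorem variance_of_disagreement_bound
    {H : Type} [Fintype H]
    (μ : H → ℝ) (hμ0 : ∀ h, 0 ≤ μ h) (hμ1 : ∑ h, μ h = 1)
    (TestErr : H → ℝ) (hTE : ∀ h, TestErr h ∈ Set.Icc (0 : ℝ) 1)
    (Dis : H → H → ℝ) (hDis : ∀ h h', Dis h h' ∈ Set.Icc (0 : ℝ) 1)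
    (hsymm : ∀ h h', Dis h h' = Dis h' h)
    (ETE EDR : ℝ)
    (hETE : ETE = ∑ h, μ h * TestErr h)
    (hEDR : EDR = ∑ h, ∑ h', μ h * μ h' * Dis h h')
    (gde : EDR = ETE)
    (κ : ℝ) (hκ : κ ∈ Set.Icc (1/2 : ℝ) 1)
    (hbound : ∀ h h', 0 < μ h → 0 < μ h' → Dis h h' ≤ κ * (TestErr h + TestErr h')) :
    (∑ h, ∑ h', μ h * μ h' * (Dis h h' - EDR) ^ 2) ≤
      2 * κ ^ 2 * (∑ h, μ h * (TestErr h - ETE) ^ 2) + (4 * κ ^ 2 - 1) * ETE ^ 2 := by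
  obtain ⟨hκ0, hκ1⟩ := hκ
  set e := TestErr with he
  set A : ℝ := ∑ h, μ h * e h ^ 2 with hA
  set S2 : ℝ := ∑ h, ∑ h', μ h * μ h' * Dis h h' ^ 2 with hS2
  -- key pointwise bound
  have key : ∀ h h', μ h * μ h' * Dis h h' ^ 2 ≤ μ h * μ h' * (κ * (e h + e h')) ^ 2 := by
    intro h h'
    rcases eq_or_lt_of_le (hμ0 h) with h0 | h0
    · rw [← h0]; ring_nf; simp
    rcases eq_or_lt_of_le (hμ0 h') with h0' | h0'
    · rw [← h0']; ring_nf; simp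
    · have hd := hbound h h' h0 h0'
      have hd0 := (hDis h h').1
      have hsq : Dis h h' ^ 2 ≤ (κ * (e h + e h')) ^ 2 := by nlinarith
      have := mul_pos h0 h0'
      nlinarith
  have hSbound : S2 ≤ κ ^ 2 * (2 * A + 2 * ETE ^ 2) := by
    have step1 : S2 ≤ ∑ h, ∑ h', μ h * μ h' * (κ * (e h + e h')) ^ 2 := by
      apply Finset.sum_le_sum; intro h _
      exact Finset.sum_le_sum fun h' _ => key h h'
    have inner : ∀ h, (∑ h', μ h * μ h' * (κ * (e h + e h')) ^ 2)
        = κ ^ 2 * (μ h * e h ^ 2 + 2 * (μ h * e h) * ETE + μ h * A) := by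
      intro h
      have hterm : ∀ h', μ h * μ h' * (κ * (e h + e h')) ^ 2
          = κ ^ 2 * ((μ h * e h ^ 2) * μ h' + 2 * (μ h * e h) * (μ h' * e h')
              + μ h * (μ h' * e h' ^ 2)) := by
        intro h'; ring
      rw [Finset.sum_congr rfl (fun h' _ => hterm h'), ← Finset.mul_sum]
      congr 1
      rw [Finset.sum_add_distrib, Finset.sum_add_distrib, ← Finset.mul_sum,
        ← Finset.mul_sum, ← Finset.mul_sum, hμ1, ← hETE]
      ring
    have step2 : (∑ h, ∑ h', μ h * μ h' * (κ * (e h + e h')) ^ 2)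
        = κ ^ 2 * (2 * A + 2 * ETE ^ 2) := by
      rw [Finset.sum_congr rfl (fun h _ => inner h), ← Finset.mul_sum]
      congr 1
      rw [Finset.sum_add_distrib, Finset.sum_add_distrib]
      have e1 : (∑ h, 2 * (μ h * e h) * ETE) = 2 * ETE * ∑ h, μ h * e h := by
        rw [Finset.mul_sum]; apply Finset.sum_congr rfl; intro h _; ring
      have e2 : (∑ h, μ h * A) = A := by rw [← Finset.sum_mul, hμ1, one_mul]
      rw [e1, e2, ← hETE, ← hA]
      ring
    linarith [step1, step2.le, step2.ge]
  -- expand the variance of Dis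
  have hVarD : (∑ h, ∑ h', μ h * μ h' * (Dis h h' - EDR) ^ 2) = S2 - EDR ^ 2 := by
    have hterm : ∀ h h', μ h * μ h' * (Dis h h' - EDR) ^ 2
        = μ h * μ h' * Dis h h' ^ 2 - 2 * EDR * (μ h * μ h' * Dis h h')
          + EDR ^ 2 * (μ h * μ h') := by
      intro h h'; ring
    have hμμ : (∑ h, ∑ h', μ h * μ h') = 1 := by
      rw [Finset.sum_congr rfl (fun h _ => (Finset.mul_sum _ _ _).symm)]
      rw [hμ1]; simpa using hμ1
    calc (∑ h, ∑ h', μ h * μ h' * (Dis h h' - EDR) ^ 2)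
        = (∑ h, ∑ h', (μ h * μ h' * Dis h h' ^ 2 - 2 * EDR * (μ h * μ h' * Dis h h')
            + EDR ^ 2 * (μ h * μ h'))) := by
          apply Finset.sum_congr rfl; intro h _
          exact Finset.sum_congr rfl fun h' _ => hterm h h'
      _ = S2 - 2 * EDR * (∑ h, ∑ h', μ h * μ h' * Dis h h')
            + EDR ^ 2 * (∑ h, ∑ h', μ h * μ h') := by
          rw [hS2]
          simp only [Finset.sum_add_distrib, Finset.sum_sub_distrib, ← Finset.mul_sum]
      _ = S2 - EDR ^ 2 := by rw [← hEDR, hμμ]; ring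
  -- expand the variance of TestErr
  have hVarE : (∑ h, μ h * (e h - ETE) ^ 2) = A - ETE ^ 2 := by
    have hterm : ∀ h, μ h * (e h - ETE) ^ 2
        = μ h * e h ^ 2 - 2 * ETE * (μ h * e h) + ETE ^ 2 * μ h := by
      intro h; ring
    rw [Finset.sum_congr rfl (fun h _ => hterm h), Finset.sum_add_distrib,
      Finset.sum_sub_distrib, ← Finset.mul_sum, ← Finset.mul_sum, ← hETE, hμ1, ← hA]
    ring
  rw [hVarD, hVarE, gde]
  nlinarith [hSbound]
end

section
/- If the Class Aggregated Calibration Error of an ensemble is zero, then the ensemble satisfies class-aggregated calibration, and hence the Generalization Disagreement Equality holds exactly. -/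
lemma indic_ne {K : ℕ} (a b : Fin K) :
    (if a ≠ b then (1 : ℝ) else 0)
      = 1 - ∑ k : Fin K, (if a = k then (1 : ℝ) else 0) * (if b = k then (1 : ℝ) else 0) := by
  by_cases h : a = b
  · subst h
    simp [Finset.sum_ite_eq, mul_ite, ite_mul]
  · have h2 : ∀ k : Fin K, (if a = k then (1 : ℝ) else 0) * (if b = k then (1 : ℝ) else 0) = 0 := by
      intro k
      by_cases h1 : a = k <;> by_cases h2 : b = k <;> simp_all
    simp [h, h2]

lemma per_omega_dis {H : Type} [Fintype H] {K : ℕ} (μ : H → ℝ) (hμ1 : ∑ h, μ h = 1)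
    (f : H → Fin K) :
    ∑ h, ∑ h', μ h * μ h' * (if f h ≠ f h' then (1 : ℝ) else 0)
      = 1 - ∑ k, (∑ h, μ h * (if f h = k then (1 : ℝ) else 0)) *
          (∑ h, μ h * (if f h = k then (1 : ℝ) else 0)) := by
  classical
  have expand : ∀ h h', μ h * μ h' * (if f h ≠ f h' then (1 : ℝ) else 0)
      = μ h * μ h' - ∑ k, (μ h * (if f h = k then (1 : ℝ) else 0)) *
          (μ h' * (if f h' = k then (1 : ℝ) else 0)) := by
    intro h h'
    rw [indic_ne, mul_sub, mul_one, Finset.mul_sum]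
    congr 1
    exact Finset.sum_congr rfl fun k _ => by ring
  simp only [expand]
  simp only [Finset.sum_sub_distrib]
  congr 1
  · rw [← Finset.sum_mul_sum, hμ1, one_mul]
  · rw [Finset.sum_congr rfl fun (h : H) _ => Finset.sum_comm, Finset.sum_comm]
    exact Finset.sum_congr rfl fun k _ => (Finset.sum_mul_sum _ _ _ _).symm

lemma per_omega_err {H : Type} [Fintype H] {K : ℕ} (μ : H → ℝ) (hμ1 : ∑ h, μ h = 1)
    (f : H → Fin K) (y : Fin K) :
    ∑ h, μ h * (if f h ≠ y then (1 : ℝ) else 0)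
      = 1 - ∑ h, μ h * (if f h = y then (1 : ℝ) else 0) := by
  have e : ∀ h, μ h * (if f h ≠ y then (1 : ℝ) else 0)
      = μ h - μ h * (if f h = y then (1 : ℝ) else 0) := by
    intro h; by_cases hh : f h = y <;> simp [hh]
  simp only [e, Finset.sum_sub_distrib, hμ1]

/-- If the Class Aggregated Calibration Error of the ensemble is zero,
then the ensemble satisfies class-aggregated calibration, and the Generalization
Disagreement Equality holds exactly. -/
theorem CACE_zero_implies_calibration_and_GDE
    {Ω H : Type} [Fintype Ω] [Fintype H] (K : ℕ)
    (w : Ω → ℝ) (hw0 : ∀ ω, 0 ≤ w ω) (hw1 : ∑ ω, w ω = 1)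
    (μ : H → ℝ) (hμ0 : ∀ h, 0 ≤ μ h) (hμ1 : ∑ h, μ h = 1)
    (Y : Ω → Fin K) (hyp : H → Ω → Fin K)
    (tilde : Fin K → Ω → ℝ)
    (htilde : ∀ k ω, tilde k ω = ∑ h, μ h * (if hyp h ω = k then (1 : ℝ) else 0))
    (hCACE : (∑ q ∈ Finset.image (fun p : Fin K × Ω => tilde p.1 p.2) Finset.univ,
        |(∑ k, ∑ ω, w ω * (if Y ω = k ∧ tilde k ω = q then (1 : ℝ) else 0)) /
            (∑ k, ∑ ω, w ω * (if tilde k ω = q then (1 : ℝ) else 0)) - q| *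
          ∑ k, ∑ ω, w ω * (if tilde k ω = q then (1 : ℝ) else 0)) = 0) :
    -- class-aggregated calibration holds
    (∀ q : ℝ, (0 < ∑ k, ∑ ω, w ω * (if tilde k ω = q then (1 : ℝ) else 0)) →
      (∑ k, ∑ ω, w ω * (if Y ω = k ∧ tilde k ω = q then (1 : ℝ) else 0)) /
        (∑ k, ∑ ω, w ω * (if tilde k ω = q then (1 : ℝ) else 0)) = q) ∧
    -- and GDE holds
    (∑ h, ∑ h', μ h * μ h' * ∑ ω, w ω * (if hyp h ω ≠ hyp h' ω then (1 : ℝ) else 0)) =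
      ∑ h, μ h * ∑ ω, w ω * (if hyp h ω ≠ Y ω then (1 : ℝ) else 0) := by
  classical
  set img := Finset.image (fun p : Fin K × Ω => tilde p.1 p.2) Finset.univ with himg
  set S : ℝ → ℝ := fun q => ∑ k, ∑ ω, w ω * (if tilde k ω = q then (1 : ℝ) else 0) with hSdef
  set N : ℝ → ℝ := fun q => ∑ k, ∑ ω, w ω * (if Y ω = k ∧ tilde k ω = q then (1 : ℝ) else 0)
    with hNdef
  have hS0 : ∀ q, 0 ≤ S q := by
    intro q
    refine Finset.sum_nonneg fun k _ => Finset.sum_nonneg fun ω _ => ?_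
    exact mul_nonneg (hw0 ω) (by split <;> norm_num)
  have hN0 : ∀ q, 0 ≤ N q := by
    intro q
    refine Finset.sum_nonneg fun k _ => Finset.sum_nonneg fun ω _ => ?_
    exact mul_nonneg (hw0 ω) (by split <;> norm_num)
  have hNS : ∀ q, N q ≤ S q := by
    intro q
    refine Finset.sum_le_sum fun k _ => Finset.sum_le_sum fun ω _ => ?_
    refine mul_le_mul_of_nonneg_left ?_ (hw0 ω)
    split_ifs with h1 h2
    · exact le_refl _
    · exact absurd h1.2 h2
    · norm_num
    · exact le_refl _
  have hterm : ∀ q ∈ img, |N q / S q - q| * S q = 0 := by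
    intro q hq
    exact (Finset.sum_eq_zero_iff_of_nonneg (fun q _ =>
      mul_nonneg (abs_nonneg _) (hS0 q))).mp hCACE q hq
  have key : ∀ q : ℝ, N q = q * S q := by
    intro q
    by_cases hq : q ∈ img
    · rcases eq_or_lt_of_le (hS0 q) with hz | hpos
      · have hNz : N q = 0 := le_antisymm (by rw [hz]; exact hNS q) (hN0 q)
        rw [hNz, ← hz]; ring
      · rcases mul_eq_zero.mp (hterm q hq) with habs | hz
        · have hdiv : N q / S q = q := by
            have := abs_eq_zero.mp habs
            linarith
          field_simp at hdiv
          linarith [hdiv]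
        · exact absurd hz (ne_of_gt hpos)
    · have hSz : S q = 0 := by
        refine Finset.sum_eq_zero fun k _ => Finset.sum_eq_zero fun ω _ => ?_
        have : tilde k ω ≠ q := fun h =>
          hq (Finset.mem_image.mpr ⟨(k, ω), Finset.mem_univ _, h⟩)
        simp [this]
      have hNz : N q = 0 := by
        refine Finset.sum_eq_zero fun k _ => Finset.sum_eq_zero fun ω _ => ?_
        have : tilde k ω ≠ q := fun h =>
          hq (Finset.mem_image.mpr ⟨(k, ω), Finset.mem_univ _, h⟩)
        simp [this]
      rw [hSz, hNz]; ring
  refine ⟨?_, ?_⟩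
  · intro q hq
    show N q / S q = q
    rw [key q]
    exact mul_div_cancel_right₀ q (ne_of_gt hq)
  · -- GDE
    have hmem : ∀ (k : Fin K) (ω : Ω), tilde k ω ∈ img := fun k ω =>
      Finset.mem_image.mpr ⟨(k, ω), Finset.mem_univ _, rfl⟩
    have fiber : ∀ (g : ℝ → ℝ) (k : Fin K) (ω : Ω),
        g (tilde k ω) = ∑ q ∈ img, if tilde k ω = q then g q else 0 := by
      intro g k ω
      rw [Finset.sum_ite_eq]
      simp [hmem k ω]
    -- LHS of GDE
    have hL : (∑ h, ∑ h', μ h * μ h' * ∑ ω, w ω * (if hyp h ω ≠ hyp h' ω then (1 : ℝ) else 0))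
        = ∑ ω, w ω * (1 - ∑ k, tilde k ω * tilde k ω) := by
      calc (∑ h, ∑ h', μ h * μ h' * ∑ ω, w ω * (if hyp h ω ≠ hyp h' ω then (1 : ℝ) else 0))
          = ∑ h, ∑ h', ∑ ω, μ h * μ h' * (w ω * (if hyp h ω ≠ hyp h' ω then (1 : ℝ) else 0)) := by
            simp only [Finset.mul_sum]
        _ = ∑ ω, ∑ h, ∑ h', μ h * μ h' * (w ω * (if hyp h ω ≠ hyp h' ω then (1 : ℝ) else 0)) := by
            rw [Finset.sum_congr rfl fun (h : H) _ => Finset.sum_comm, Finset.sum_comm]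
        _ = ∑ ω, w ω * ∑ h, ∑ h', μ h * μ h' * (if hyp h ω ≠ hyp h' ω then (1 : ℝ) else 0) := by
            refine Finset.sum_congr rfl fun ω _ => ?_
            rw [Finset.mul_sum]
            refine Finset.sum_congr rfl fun h _ => ?_
            rw [Finset.mul_sum]
            exact Finset.sum_congr rfl fun h' _ => by ring
        _ = ∑ ω, w ω * (1 - ∑ k, tilde k ω * tilde k ω) := by
            refine Finset.sum_congr rfl fun ω _ => ?_
            congr 1
            have hpo := per_omega_dis μ hμ1 (fun h => hyp h ω)
            rw [hpo]
            congr 1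
            exact Finset.sum_congr rfl fun k _ => by rw [htilde]
    -- RHS of GDE
    have hR : (∑ h, μ h * ∑ ω, w ω * (if hyp h ω ≠ Y ω then (1 : ℝ) else 0))
        = ∑ ω, w ω * (1 - tilde (Y ω) ω) := by
      calc (∑ h, μ h * ∑ ω, w ω * (if hyp h ω ≠ Y ω then (1 : ℝ) else 0))
          = ∑ h, ∑ ω, μ h * (w ω * (if hyp h ω ≠ Y ω then (1 : ℝ) else 0)) := by
            simp only [Finset.mul_sum]
        _ = ∑ ω, ∑ h, μ h * (w ω * (if hyp h ω ≠ Y ω then (1 : ℝ) else 0)) := Finset.sum_comm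
        _ = ∑ ω, w ω * ∑ h, μ h * (if hyp h ω ≠ Y ω then (1 : ℝ) else 0) := by
            refine Finset.sum_congr rfl fun ω _ => ?_
            rw [Finset.mul_sum]
            exact Finset.sum_congr rfl fun h _ => by ring
        _ = ∑ ω, w ω * (1 - tilde (Y ω) ω) := by
            refine Finset.sum_congr rfl fun ω _ => ?_
            congr 1
            have hpo := per_omega_err μ hμ1 (fun h => hyp h ω) (Y ω)
            rw [hpo, ← htilde]
    rw [hL, hR]
    -- reduce to the second-moment identity
    have main : (∑ ω, w ω * ∑ k, tilde k ω * tilde k ω) = ∑ ω, w ω * tilde (Y ω) ω := by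
      have lhs_eq : (∑ ω, w ω * ∑ k, tilde k ω * tilde k ω) = ∑ q ∈ img, q * N q := by
        calc (∑ ω, w ω * ∑ k, tilde k ω * tilde k ω)
            = ∑ ω, ∑ k, w ω * (tilde k ω * tilde k ω) := by
              simp only [Finset.mul_sum]
          _ = ∑ k, ∑ ω, w ω * (tilde k ω * tilde k ω) := Finset.sum_comm
          _ = ∑ k, ∑ ω, ∑ q ∈ img, (q * q) * (w ω * (if tilde k ω = q then (1 : ℝ) else 0)) := by
              refine Finset.sum_congr rfl fun k _ => Finset.sum_congr rfl fun ω _ => ?_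
              rw [fiber (fun q => q * q) k ω, Finset.mul_sum]
              refine Finset.sum_congr rfl fun q _ => ?_
              split_ifs <;> ring
          _ = ∑ q ∈ img, ∑ k, ∑ ω, (q * q) * (w ω * (if tilde k ω = q then (1 : ℝ) else 0)) := by
              rw [Finset.sum_congr rfl fun (k : Fin K) _ => Finset.sum_comm, Finset.sum_comm]
          _ = ∑ q ∈ img, (q * q) * S q := by
              refine Finset.sum_congr rfl fun q _ => ?_
              rw [hSdef]
              simp only [Finset.mul_sum]
          _ = ∑ q ∈ img, q * N q := by
              refine Finset.sum_congr rfl fun q _ => ?_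
              rw [key q]; ring
      have rhs_eq : (∑ ω, w ω * tilde (Y ω) ω) = ∑ q ∈ img, q * N q := by
        calc (∑ ω, w ω * tilde (Y ω) ω)
            = ∑ ω, w ω * ∑ k, (if Y ω = k then (1 : ℝ) else 0) * tilde k ω := by
              refine Finset.sum_congr rfl fun ω _ => ?_
              congr 1
              rw [show (∑ k, (if Y ω = k then (1 : ℝ) else 0) * tilde k ω)
                  = ∑ k, (if Y ω = k then tilde k ω else 0) from
                  Finset.sum_congr rfl fun k _ => by split_ifs <;> ring,
                Finset.sum_ite_eq]
              simp
          _ = ∑ k, ∑ ω, w ω * ((if Y ω = k then (1 : ℝ) else 0) * tilde k ω) := by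
              simp only [Finset.mul_sum]
              exact Finset.sum_comm
          _ = ∑ k, ∑ ω, ∑ q ∈ img, q * (w ω * (if Y ω = k ∧ tilde k ω = q then (1 : ℝ) else 0)) := by
              refine Finset.sum_congr rfl fun k _ => Finset.sum_congr rfl fun ω _ => ?_
              by_cases h1 : Y ω = k
              · rw [if_pos h1, one_mul]
                have hand : ∀ q : ℝ, (if Y ω = k ∧ tilde k ω = q then (1 : ℝ) else 0)
                    = (if tilde k ω = q then (1 : ℝ) else 0) := fun q => by simp [h1]
                simp only [hand]
                conv_lhs => rw [fiber (fun q => q) k ω]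
                rw [Finset.mul_sum]
                refine Finset.sum_congr rfl fun q _ => ?_
                split_ifs <;> ring
              · rw [if_neg h1, zero_mul, mul_zero]
                symm
                refine Finset.sum_eq_zero fun q _ => ?_
                rw [if_neg (fun hc => h1 hc.1), mul_zero, mul_zero]
          _ = ∑ q ∈ img, ∑ k, ∑ ω, q * (w ω * (if Y ω = k ∧ tilde k ω = q then (1 : ℝ) else 0)) := by
              rw [Finset.sum_congr rfl fun (k : Fin K) _ => Finset.sum_comm, Finset.sum_comm]
          _ = ∑ q ∈ img, q * N q := by
              refine Finset.sum_congr rfl fun q _ => ?_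
              rw [hNdef]
              simp only [Finset.mul_sum]
      rw [lhs_eq, rhs_eq]
    simp only [mul_sub, mul_one, Finset.sum_sub_distrib, main]
end

section
/- If each data point is either 'easy' (every hypothesis in the support of μ predicts the true label) or 'hard' (the prediction h(x) under h ∼ μ is uniformly distributed over the K classes), then the Generalization Disagreement Equality holds pointwise: for every x, the expected disagreement at x equals the expected error at x, namely 0 if x is easy and (K−1)/K if x is hard. -/
/-!
Write `p k` for the mass that `μ` puts on hypotheses predicting `k` at `x`. The expected error at
`x` is `1 - p (Y x)` and the expected disagreement is `1 - ∑ k, p k ^ 2`, so pointwise GDE says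
`∑ k, p k ^ 2 = p (Y x)`. An easy point has `p = δ_{Y x}`, and a hard point has `p ≡ 1 / K`;
both satisfy this identity, the latter because `K · (1 / K) ^ 2 = 1 / K`.
-/

open Finset

section PushforwardWeight

variable {H α : Type*} [Fintype H] [DecidableEq α]

def pushforwardWeight (μ : H → ℝ) (f : H → α) (a : α) : ℝ :=
  ∑ h, μ h * if f h = a then 1 else 0

theorem pushforwardWeight_nonneg {μ : H → ℝ} (hμ : ∀ h, 0 ≤ μ h) (f : H → α) (a : α) :
    0 ≤ pushforwardWeight μ f a :=
  sum_nonneg fun h _ => mul_nonneg (hμ h) (by split_ifs <;> norm_num)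

theorem sum_pushforwardWeight_mul [Fintype α] (μ : H → ℝ) (f : H → α) (g : α → ℝ) :
    ∑ a, pushforwardWeight μ f a * g a = ∑ h, μ h * g (f h) := by
  simp only [pushforwardWeight, sum_mul, mul_assoc, ite_mul, one_mul, zero_mul]
  rw [sum_comm]
  simp

theorem sum_pushforwardWeight [Fintype α] (μ : H → ℝ) (f : H → α) :
    ∑ a, pushforwardWeight μ f a = ∑ h, μ h := by
  simpa using sum_pushforwardWeight_mul μ f 1

theorem sum_mul_ite_ne_eq_sub (μ : H → ℝ) (f : H → α) (a : α) :
    ∑ h, μ h * (if f h ≠ a then 1 else 0) = ∑ h, μ h - pushforwardWeight μ f a := by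
  rw [pushforwardWeight, ← sum_sub_distrib]
  refine sum_congr rfl fun h _ => ?_
  by_cases hfa : f h = a <;> simp [hfa]

theorem sum_sum_mul_ite_ne_eq_sub [Fintype α] (μ : H → ℝ) (f : H → α) :
    ∑ h, ∑ h', μ h * μ h' * (if f h ≠ f h' then 1 else 0) =
      (∑ h, μ h) ^ 2 - ∑ a, pushforwardWeight μ f a ^ 2 := by
  have hinner : ∀ h, ∑ h', μ h * μ h' * (if f h ≠ f h' then 1 else 0) =
      μ h * (∑ h', μ h' - pushforwardWeight μ f (f h)) := fun h => by
    simp only [← sum_mul_ite_ne_eq_sub, mul_sum, mul_assoc, ne_comm]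
  simp only [hinner, mul_sub, sum_sub_distrib, ← sum_mul, sq,
    ← sum_pushforwardWeight_mul μ f (pushforwardWeight μ f)]

end PushforwardWeight

section ProbabilityVector

variable {α : Type*} [Fintype α]

theorem sum_sq_eq_of_eq_one {p : α → ℝ} (hp0 : ∀ a, 0 ≤ p a) (hp1 : ∑ a, p a = 1) {a : α}
    (ha : p a = 1) : ∑ b, p b ^ 2 = p a := by
  classical
  have hrest : ∑ b ∈ univ.erase a, p b = 0 := by
    linarith [add_sum_erase univ p (mem_univ a)]
  have hzero : ∀ b, b ≠ a → p b = 0 := fun b hb =>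
    (sum_eq_zero_iff_of_nonneg fun c _ => hp0 c).mp hrest b (mem_erase.mpr ⟨hb, mem_univ b⟩)
  rw [sum_eq_single a (fun b _ hb => by rw [hzero b hb, sq, zero_mul]) (by simp), ha, one_pow]

theorem sum_sq_eq_of_eq_inv_card {p : α → ℝ} (hp : ∀ a, p a = 1 / Fintype.card α) (a : α) :
    ∑ b, p b ^ 2 = p a := by
  have : Nonempty α := ⟨a⟩
  have hcard : (Fintype.card α : ℝ) ≠ 0 := Nat.cast_ne_zero.mpr Fintype.card_ne_zero
  simp only [hp, sum_const, card_univ, nsmul_eq_mul]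
  field_simp

end ProbabilityVector

theorem easy_hard_pointwise_GDE_general
    {X H : Type} [Fintype H] (K : ℕ)
    (μ : H → ℝ) (hμ0 : ∀ h, 0 ≤ μ h) (hμ1 : ∑ h, μ h = 1)
    (hyp : H → X → Fin K) (Y : X → Fin K)
    (heasyhard : ∀ x : X,
      (∑ h, μ h * (if hyp h x = Y x then (1 : ℝ) else 0)) = 1 ∨
      (∀ k : Fin K, (∑ h, μ h * (if hyp h x = k then (1 : ℝ) else 0)) = 1 / K)) :
    ∀ x : X,
      ((∑ h, ∑ h', μ h * μ h' * (if hyp h x ≠ hyp h' x then (1 : ℝ) else 0)) =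
        ∑ h, μ h * (if hyp h x ≠ Y x then (1 : ℝ) else 0)) ∧
      ((∑ h, μ h * (if hyp h x = Y x then (1 : ℝ) else 0)) = 1 →
        (∑ h, μ h * (if hyp h x ≠ Y x then (1 : ℝ) else 0)) = 0) ∧
      ((∀ k : Fin K, (∑ h, μ h * (if hyp h x = k then (1 : ℝ) else 0)) = 1 / K) →
        (∑ h, μ h * (if hyp h x ≠ Y x then (1 : ℝ) else 0)) = ((K : ℝ) - 1) / K) := by
  intro x
  rw [sum_sum_mul_ite_ne_eq_sub, sum_mul_ite_ne_eq_sub, hμ1]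
  set p := pushforwardWeight μ fun h => hyp h x
  have hp1 : ∑ k, p k = 1 := by rw [sum_pushforwardWeight, hμ1]
  have hsq : ∑ k, p k ^ 2 = p (Y x) := by
    rcases heasyhard x with heasy | hhard
    · exact sum_sq_eq_of_eq_one (pushforwardWeight_nonneg hμ0 _) hp1 heasy
    · exact sum_sq_eq_of_eq_inv_card (fun k => by rw [Fintype.card_fin]; exact hhard k) (Y x)
  refine ⟨by rw [hsq, one_pow], fun heasy => ?_, fun hhard => ?_⟩
  · rw [show p (Y x) = 1 from heasy, sub_self]
  · have hK : (K : ℝ) ≠ 0 := Nat.cast_ne_zero.mpr (Y x).pos.ne'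
    rw [show p (Y x) = 1 / K from hhard (Y x)]
    field_simp

/-- If every data point is either 'easy' (all hypotheses in the support
predict the true label) or 'hard' (the sampled prediction is uniform over the `K`
classes), then GDE holds pointwise: for every `x` the expected disagreement equals
the expected error, namely `0` if `x` is easy and `(K−1)/K` if `x` is hard. -/
theorem easy_hard_pointwise_GDE
    {X H : Type} [Fintype H] (K : ℕ) [NeZero K]
    (μ : H → ℝ) (hμ0 : ∀ h, 0 ≤ μ h) (hμ1 : ∑ h, μ h = 1)
    (hyp : H → X → Fin K) (Y : X → Fin K)
    (heasyhard : ∀ x : X,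
      (∑ h, μ h * (if hyp h x = Y x then (1 : ℝ) else 0)) = 1 ∨
      (∀ k : Fin K, (∑ h, μ h * (if hyp h x = k then (1 : ℝ) else 0)) = 1 / K)) :
    ∀ x : X,
      ((∑ h, ∑ h', μ h * μ h' * (if hyp h x ≠ hyp h' x then (1 : ℝ) else 0)) =
        ∑ h, μ h * (if hyp h x ≠ Y x then (1 : ℝ) else 0)) ∧
      ((∑ h, μ h * (if hyp h x = Y x then (1 : ℝ) else 0)) = 1 →
        (∑ h, μ h * (if hyp h x ≠ Y x then (1 : ℝ) else 0)) = 0) ∧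
      ((∀ k : Fin K, (∑ h, μ h * (if hyp h x = k then (1 : ℝ) else 0)) = 1 / K) →
        (∑ h, μ h * (if hyp h x ≠ Y x then (1 : ℝ) else 0)) = ((K : ℝ) - 1) / K) :=
  easy_hard_pointwise_GDE_general K μ hμ0 hμ1 hyp Y heasyhard
end

section
/- If the ensemble satisfies class-aggregated calibration, then the expected test error can be computed purely from the confidences: ETE = ∑_q q(1−q) ∑_k P(h̃_k(X)=q), summed over the finitely many confidence values q; in particular, the test error is determined by the unlabeled marginal distribution of X together with h̃. -/
/-- Under class-aggregated calibration, the expected test error is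
determined by the confidences alone:
`ETE = ∑_q q(1−q) ∑_k P(h̃_k(X)=q)`, summed over the finitely many confidence values. -/
theorem calibrated_test_error_from_confidences
    {Ω H : Type} [Fintype Ω] [Fintype H] (K : ℕ)
    (w : Ω → ℝ) (hw0 : ∀ ω, 0 ≤ w ω) (hw1 : ∑ ω, w ω = 1)
    (μ : H → ℝ) (hμ0 : ∀ h, 0 ≤ μ h) (hμ1 : ∑ h, μ h = 1)
    (Y : Ω → Fin K) (hyp : H → Ω → Fin K)
    (tilde : Fin K → Ω → ℝ)
    (htilde : ∀ k ω, tilde k ω = ∑ h, μ h * (if hyp h ω = k then (1 : ℝ) else 0))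
    (calib : ∀ q : ℝ,
      (0 < ∑ k, ∑ ω, w ω * (if tilde k ω = q then (1 : ℝ) else 0)) →
      (∑ k, ∑ ω, w ω * (if Y ω = k ∧ tilde k ω = q then (1 : ℝ) else 0)) =
        q * ∑ k, ∑ ω, w ω * (if tilde k ω = q then (1 : ℝ) else 0)) :
    (∑ h, μ h * ∑ ω, w ω * (if hyp h ω ≠ Y ω then (1 : ℝ) else 0)) =
      ∑ q ∈ Finset.image (fun p : Fin K × Ω => tilde p.1 p.2) Finset.univ,
        q * (1 - q) * ∑ k, ∑ ω, w ω * (if tilde k ω = q then (1 : ℝ) else 0) := by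
  classical
  set S := Finset.image (fun p : Fin K × Ω => tilde p.1 p.2) Finset.univ with hS
  set N : ℝ → ℝ := fun q => ∑ k, ∑ ω, w ω * (if tilde k ω = q then (1 : ℝ) else 0)
    with hN
  -- rewrite the calibration LHS as a single sum over ω
  have hA : ∀ q : ℝ,
      (∑ k, ∑ ω, w ω * (if Y ω = k ∧ tilde k ω = q then (1 : ℝ) else 0)) =
      ∑ ω, w ω * (if tilde (Y ω) ω = q then (1 : ℝ) else 0) := by
    intro q
    rw [Finset.sum_comm]
    refine Finset.sum_congr rfl fun ω _ => ?_
    rw [Finset.sum_eq_single (Y ω)]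
    · simp
    · intro k _ hk
      have : ¬ (Y ω = k ∧ tilde k ω = q) := fun h => hk h.1.symm
      simp [this]
    · simp
  have hNnonneg : ∀ q, 0 ≤ N q := by
    intro q
    refine Finset.sum_nonneg fun k _ => Finset.sum_nonneg fun ω _ => ?_
    have := hw0 ω
    positivity
  -- the calibration identity, valid for all q
  have hcal : ∀ q : ℝ,
      (∑ ω, w ω * (if tilde (Y ω) ω = q then (1 : ℝ) else 0)) = q * N q := by
    intro q
    by_cases hq : 0 < N q
    · rw [← hA q]; exact calib q hq
    · have hNq : N q = 0 := le_antisymm (not_lt.mp hq) (hNnonneg q)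
      have hterm : ∀ k ω, w ω * (if tilde k ω = q then (1 : ℝ) else 0) = 0 := by
        intro k ω
        have h1 : ∀ k ∈ (Finset.univ : Finset (Fin K)),
            (0:ℝ) ≤ ∑ ω, w ω * (if tilde k ω = q then (1 : ℝ) else 0) := by
          intro k _
          refine Finset.sum_nonneg fun ω _ => ?_
          have := hw0 ω; positivity
        have h2 := (Finset.sum_eq_zero_iff_of_nonneg h1).mp hNq k (Finset.mem_univ k)
        have h3 : ∀ ω ∈ (Finset.univ : Finset Ω),
            (0:ℝ) ≤ w ω * (if tilde k ω = q then (1 : ℝ) else 0) := by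
          intro ω _; have := hw0 ω; positivity
        exact (Finset.sum_eq_zero_iff_of_nonneg h3).mp h2 ω (Finset.mem_univ ω)
      rw [hNq, mul_zero]
      exact Finset.sum_eq_zero fun ω _ => hterm (Y ω) ω
  -- LHS equals ∑ ω, w ω * (1 - tilde (Y ω) ω)
  have h1 : (∑ h, μ h * ∑ ω, w ω * (if hyp h ω ≠ Y ω then (1 : ℝ) else 0))
      = ∑ ω, w ω * (1 - tilde (Y ω) ω) := by
    simp_rw [Finset.mul_sum]
    rw [Finset.sum_comm]
    refine Finset.sum_congr rfl fun ω _ => ?_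
    rw [htilde]
    have key : ∀ h : H, μ h * (w ω * (if hyp h ω ≠ Y ω then (1:ℝ) else 0))
        = w ω * μ h - w ω * (μ h * (if hyp h ω = Y ω then (1:ℝ) else 0)) := by
      intro h
      by_cases hc : hyp h ω = Y ω <;> simp [hc] <;> ring
    rw [Finset.sum_congr rfl fun h _ => key h, Finset.sum_sub_distrib,
      ← Finset.mul_sum, hμ1, mul_one, mul_sub, mul_one, Finset.mul_sum]
  -- RHS equals the same thing
  have h2 : (∑ q ∈ S, q * (1 - q) * N q) = ∑ ω, w ω * (1 - tilde (Y ω) ω) := by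
    have : ∀ q ∈ S, q * (1 - q) * N q
        = ∑ ω, (if tilde (Y ω) ω = q then (1 - q) * w ω else 0) := by
      intro q _
      rw [mul_comm q (1 - q), mul_assoc, ← hcal q, Finset.mul_sum]
      refine Finset.sum_congr rfl fun ω _ => ?_
      by_cases hc : tilde (Y ω) ω = q <;> simp [hc] <;> ring
    rw [Finset.sum_congr rfl this, Finset.sum_comm]
    refine Finset.sum_congr rfl fun ω _ => ?_
    rw [Finset.sum_ite_eq S (tilde (Y ω) ω) (fun q => (1 - q) * w ω)]
    have hmem : tilde (Y ω) ω ∈ S := by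
      rw [hS]
      exact Finset.mem_image.mpr ⟨(Y ω, ω), Finset.mem_univ _, rfl⟩
    rw [if_pos hmem]; ring
  rw [h1, ← h2]
end
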